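/- In the F₂-vector space F₂⁵ with standard basis e₁,…,e₅, consider the two 5-tuples A = (e₁, e₂, e₃, e₄, e₁+e₂+e₃+e₄) and B = (e₁, e₂, e₁+e₄, e₂+e₃, e₃+e₄). Then: (a) in each tuple all five vectors are nonzero and pairwise distinct; (b) in each tuple, any four of the five vectors are linearly independent, and the sum of all five vectors is 0; (c) there exists an invertible F₂-linear map of F₂⁵ carrying the tuple A to the tuple B. -/
import Mathlib


/-- Standard basis of `F₂⁵`. -/
noncomputable def e2 (j : Fin 5) : Fin 5 → ZMod 2 := Pi.single j 1

/-- The reductions mod 2 of the linear forms defining the generators of `σ_NS`. -/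
noncomputable def tupleA : Fin 5 → (Fin 5 → ZMod 2) :=
  ![e2 0, e2 1, e2 2, e2 3, e2 0 + e2 1 + e2 2 + e2 3]

/-- The reductions mod 2 of the linear forms defining the generators of `σ_{C₅}`. -/
noncomputable def tupleB : Fin 5 → (Fin 5 → ZMod 2) :=
  ![e2 0, e2 1, e2 0 + e2 3, e2 1 + e2 2, e2 2 + e2 3]

def A' : Fin 5 → Fin 5 → ZMod 2 :=
  ![![1,0,0,0,0], ![0,1,0,0,0], ![0,0,1,0,0], ![0,0,0,1,0], ![1,1,1,1,0]]

def B' : Fin 5 → Fin 5 → ZMod 2 :=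
  ![![1,0,0,0,0], ![0,1,0,0,0], ![1,0,0,1,0], ![0,1,1,0,0], ![0,0,1,1,0]]

lemma hA : tupleA = A' := by
  funext j i
  fin_cases j <;> fin_cases i <;>
    simp [tupleA, A', e2, Pi.single_apply]

lemma hB : tupleB = B' := by
  funext j i
  fin_cases j <;> fin_cases i <;>
    simp [tupleB, B', e2, Pi.single_apply]

def M : Matrix (Fin 5) (Fin 5) (ZMod 2) :=
  !![1,0,1,0,0; 0,1,0,1,0; 0,0,0,1,0; 0,0,1,0,0; 0,0,0,0,1]

def N : Matrix (Fin 5) (Fin 5) (ZMod 2) :=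
  !![1,0,0,1,0; 0,1,1,0,0; 0,0,0,1,0; 0,0,1,0,0; 0,0,0,0,1]

lemma hMN : M * N = 1 := by decide
lemma hNM : N * M = 1 := by decide

noncomputable def fEquiv : (Fin 5 → ZMod 2) ≃ₗ[ZMod 2] (Fin 5 → ZMod 2) :=
  LinearEquiv.ofLinear (Matrix.toLin' M) (Matrix.toLin' N)
    (by rw [← Matrix.toLin'_mul, hMN, Matrix.toLin'_one])
    (by rw [← Matrix.toLin'_mul, hNM, Matrix.toLin'_one])

/-- (a) each tuple consists of five distinct nonzero vectors; (b) any four of the five vectors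
of each tuple are linearly independent and the five vectors sum to zero; (c) an invertible
`F₂`-linear map of `F₂⁵` carries the tuple `A` to the tuple `B`. -/
theorem sigmaNS_sigmaC5_coincide_mod_two :
    ((∀ j, tupleA j ≠ 0) ∧ Function.Injective tupleA ∧
     (∀ j, tupleB j ≠ 0) ∧ Function.Injective tupleB) ∧
    ((∀ j : Fin 5, LinearIndependent (ZMod 2) fun k : {k : Fin 5 // k ≠ j} => tupleA k.val) ∧
     (∑ j, tupleA j) = 0 ∧
     (∀ j : Fin 5, LinearIndependent (ZMod 2) fun k : {k : Fin 5 // k ≠ j} => tupleB k.val) ∧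
     (∑ j, tupleB j) = 0) ∧
    (∃ f : (Fin 5 → ZMod 2) ≃ₗ[ZMod 2] (Fin 5 → ZMod 2), ∀ j, f (tupleA j) = tupleB j) := by
  rw [hA, hB]
  refine ⟨⟨by decide, by decide, by decide, by decide⟩,
    ⟨?_, by decide, ?_, by decide⟩, ⟨fEquiv, ?_⟩⟩
  · intro j
    rw [Fintype.linearIndependent_iff]
    revert j; decide
  · intro j
    rw [Fintype.linearIndependent_iff]
    revert j; decide
  · intro j
    show Matrix.toLin' M (A' j) = B' j
    rw [Matrix.toLin'_apply]
    revert j; decide
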